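/- For the symmetric Pareto distribution with shape 2 and any c > 0: ∫_{-∞}^{-c} f(z+c) F(z) F(z+c) dz ≤ F(-c)/4, ∫_0^∞ f(z+c) F(z) F(z+c) dz ≤ F(-c), where f(x) = 1/(|x|+1)^3 and F is its CDF; note F(-c) = 1/(2(c+1)^2). -/

import Mathlib

open Real MeasureTheory

/-- Density of the symmetric Pareto distribution with shape 2. -/
noncomputable def sParetoPdf (x : ℝ) : ℝ := 1 / (|x| + 1) ^ 3

/-- CDF of the symmetric Pareto distribution with shape 2. -/
noncomputable def sParetoCdf (x : ℝ) : ℝ :=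
  if x < 0 then 1 / (2 * (1 - x) ^ 2) else 1 - 1 / (2 * (x + 1) ^ 2)

/-!
On `z ≤ -c` every factor of the integrand is explicit, and `F z ≤ F (-c)` leaves
`(1 - z - c)⁻⁵ / (4 (c + 1)²)`, whose integral is `F(-c)/8`. On `z > 0` both CDF factors are
at most `1`, and the density alone integrates to `∫₀^∞ (z + c + 1)⁻³ dz = F(-c)`.
-/

open Set Filter Topology

section PowerTail

variable {m : ℕ} {a d : ℝ}

lemma hasDerivAt_neg_inv_mul_add_pow (hm : m ≠ 0) {x : ℝ} (hx : x + d ≠ 0) :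
    HasDerivAt (fun x : ℝ => -((m : ℝ) * (x + d) ^ m)⁻¹) ((x + d) ^ (m + 1))⁻¹ x := by
  have hpow := ((hasDerivAt_id x).add_const d).pow m
  have hm' : (m : ℝ) ≠ 0 := Nat.cast_ne_zero.mpr hm
  have h := ((hpow.const_mul (m : ℝ)).inv (mul_ne_zero hm' (pow_ne_zero m hx))).neg
  refine h.congr_deriv ?_
  obtain ⟨k, rfl⟩ := Nat.exists_eq_add_one_of_ne_zero hm
  simp only [Pi.pow_apply, id_eq, mul_one, Nat.add_sub_cancel]
  field_simp
  ring

lemma tendsto_neg_inv_mul_add_pow (hm : m ≠ 0) :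
    Tendsto (fun x : ℝ => -((m : ℝ) * (x + d) ^ m)⁻¹) atTop (𝓝 0) := by
  have h : Tendsto (fun x : ℝ => (m : ℝ) * (x + d) ^ m) atTop atTop :=
    ((tendsto_pow_atTop hm).comp (tendsto_atTop_add_const_right _ d tendsto_id)).const_mul_atTop
      (by positivity)
  simpa using h.inv_tendsto_atTop.neg

lemma hasDerivAt_neg_inv_mul_add_pow_of_mem_Ici (hm : m ≠ 0) (h : 0 < a + d) :
    ∀ x ∈ Ici a, HasDerivAt (fun x : ℝ => -((m : ℝ) * (x + d) ^ m)⁻¹) ((x + d) ^ (m + 1))⁻¹ x :=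
  fun x hx => hasDerivAt_neg_inv_mul_add_pow hm (show 0 < x + d by linarith [mem_Ici.mp hx]).ne'

lemma inv_add_pow_nonneg_of_mem_Ioi (h : 0 < a + d) :
    ∀ x ∈ Ioi a, 0 ≤ ((x + d) ^ (m + 1))⁻¹ := by
  intro x hx
  have : 0 < x + d := by linarith [mem_Ioi.mp hx]
  positivity

lemma integrableOn_Ioi_inv_add_pow (hm : m ≠ 0) (h : 0 < a + d) :
    IntegrableOn (fun x => ((x + d) ^ (m + 1))⁻¹) (Ioi a) :=
  integrableOn_Ioi_deriv_of_nonneg' (hasDerivAt_neg_inv_mul_add_pow_of_mem_Ici hm h)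
    (inv_add_pow_nonneg_of_mem_Ioi h) (tendsto_neg_inv_mul_add_pow hm)

lemma integral_Ioi_inv_add_pow (hm : m ≠ 0) (h : 0 < a + d) :
    ∫ x in Ioi a, ((x + d) ^ (m + 1))⁻¹ = ((m : ℝ) * (a + d) ^ m)⁻¹ := by
  rw [integral_Ioi_of_hasDerivAt_of_nonneg' (hasDerivAt_neg_inv_mul_add_pow_of_mem_Ici hm h)
    (inv_add_pow_nonneg_of_mem_Ioi h) (tendsto_neg_inv_mul_add_pow hm), zero_sub, neg_neg]

end PowerTail

section SymmetricPareto

lemma sParetoPdf_nonneg (x : ℝ) : 0 ≤ sParetoPdf x := by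
  unfold sParetoPdf; positivity

lemma sParetoPdf_of_nonneg {x : ℝ} (hx : 0 ≤ x) : sParetoPdf x = ((x + 1) ^ 3)⁻¹ := by
  rw [sParetoPdf, abs_of_nonneg hx, one_div]

lemma sParetoPdf_of_nonpos {x : ℝ} (hx : x ≤ 0) : sParetoPdf x = ((1 - x) ^ 3)⁻¹ := by
  rw [sParetoPdf, abs_of_nonpos hx, one_div, neg_add_eq_sub]

lemma sParetoCdf_of_neg {x : ℝ} (hx : x < 0) : sParetoCdf x = (2 * (1 - x) ^ 2)⁻¹ := by
  rw [sParetoCdf, if_pos hx, one_div]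

lemma sParetoCdf_nonneg (x : ℝ) : 0 ≤ sParetoCdf x := by
  unfold sParetoCdf
  split_ifs with hx
  · positivity
  · have : 1 / (2 * (x + 1) ^ 2) ≤ 1 / 2 := by
      gcongr
      nlinarith
    linarith

lemma sParetoCdf_le_one (x : ℝ) : sParetoCdf x ≤ 1 := by
  unfold sParetoCdf
  split_ifs with hx
  · have : 0 < 1 - x := by linarith
    rw [div_le_one (by positivity)]
    nlinarith
  · have : 0 ≤ 1 / (2 * (x + 1) ^ 2) := by positivity
    linarith

lemma sParetoCdf_neg {c : ℝ} (hc : 0 < c) : sParetoCdf (-c) = 1 / (2 * (c + 1) ^ 2) := by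
  rw [sParetoCdf_of_neg (neg_neg_of_pos hc), sub_neg_eq_add, add_comm, one_div]

lemma sParetoPdf_mul_cdf_mul_cdf_nonneg (c z : ℝ) :
    0 ≤ sParetoPdf (z + c) * sParetoCdf z * sParetoCdf (z + c) := by
  have := sParetoCdf_nonneg z
  have := sParetoCdf_nonneg (z + c)
  have := sParetoPdf_nonneg (z + c)
  positivity

lemma sParetoPdf_mul_cdf_mul_cdf_neg_le {c : ℝ} (hc : 0 ≤ c) {x : ℝ} (hx : c < x) :
    sParetoPdf (-x + c) * sParetoCdf (-x) * sParetoCdf (-x + c) ≤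
      (4 * (c + 1) ^ 2)⁻¹ * ((x + (1 - c)) ^ (4 + 1))⁻¹ := by
  have hxc : 0 < x + (1 - c) := by linarith
  rw [sParetoPdf_of_nonpos (by linarith), sParetoCdf_of_neg (by linarith),
    sParetoCdf_of_neg (by linarith), ← mul_inv, ← mul_inv, ← mul_inv]
  apply inv_anti₀ (by positivity)
  have hsq : (c + 1) ^ 2 ≤ (1 + x) ^ 2 := by nlinarith
  calc 4 * (c + 1) ^ 2 * (x + (1 - c)) ^ (4 + 1)
      ≤ 4 * (1 + x) ^ 2 * (x + (1 - c)) ^ (4 + 1) := by gcongr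
    _ = (1 - (-x + c)) ^ 3 * (2 * (1 - -x) ^ 2) * (2 * (1 - (-x + c)) ^ 2) := by ring

lemma sParetoPdf_mul_cdf_mul_cdf_le {c : ℝ} (hc : 0 ≤ c) {z : ℝ} (hz : 0 ≤ z) :
    sParetoPdf (z + c) * sParetoCdf z * sParetoCdf (z + c) ≤ ((z + (c + 1)) ^ (2 + 1))⁻¹ := by
  have hpdf := sParetoPdf_nonneg (z + c)
  calc sParetoPdf (z + c) * sParetoCdf z * sParetoCdf (z + c)
      ≤ sParetoPdf (z + c) * sParetoCdf z :=
        mul_le_of_le_one_right (mul_nonneg hpdf (sParetoCdf_nonneg z)) (sParetoCdf_le_one _)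
    _ ≤ sParetoPdf (z + c) := mul_le_of_le_one_right hpdf (sParetoCdf_le_one z)
    _ = ((z + (c + 1)) ^ (2 + 1))⁻¹ := by rw [sParetoPdf_of_nonneg (by linarith), add_assoc]

end SymmetricPareto

theorem stmt7 (c : ℝ) (hc : 0 < c) :
    ((∫ z in Set.Iic (-c), sParetoPdf (z + c) * sParetoCdf z * sParetoCdf (z + c)) ≤
        sParetoCdf (-c) / 4) ∧
    ((∫ z in Set.Ioi (0 : ℝ), sParetoPdf (z + c) * sParetoCdf z * sParetoCdf (z + c)) ≤
        sParetoCdf (-c)) ∧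
    sParetoCdf (-c) = 1 / (2 * (c + 1) ^ 2) := by
  refine ⟨?_, ?_, sParetoCdf_neg hc⟩
  · rw [← integral_comp_neg_Ioi c]
    calc (∫ x in Ioi c, sParetoPdf (-x + c) * sParetoCdf (-x) * sParetoCdf (-x + c))
        ≤ ∫ x in Ioi c, (4 * (c + 1) ^ 2)⁻¹ * ((x + (1 - c)) ^ (4 + 1))⁻¹ :=
          integral_mono_of_nonneg
            (Eventually.of_forall fun x => sParetoPdf_mul_cdf_mul_cdf_nonneg c (-x))
            ((integrableOn_Ioi_inv_add_pow four_ne_zero (by linarith)).const_mul _)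
            ((ae_restrict_mem measurableSet_Ioi).mono fun x hx =>
              sParetoPdf_mul_cdf_mul_cdf_neg_le hc.le hx)
      _ = (4 * (c + 1) ^ 2)⁻¹ * (4 * 1 ^ 4)⁻¹ := by
          rw [integral_const_mul, integral_Ioi_inv_add_pow four_ne_zero (by linarith),
            add_sub_cancel, Nat.cast_ofNat]
      _ ≤ sParetoCdf (-c) / 4 := by
          rw [sParetoCdf_neg hc]
          field_simp
          nlinarith
  · calc (∫ z in Ioi (0 : ℝ), sParetoPdf (z + c) * sParetoCdf z * sParetoCdf (z + c))
        ≤ ∫ z in Ioi (0 : ℝ), ((z + (c + 1)) ^ (2 + 1))⁻¹ :=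
          integral_mono_of_nonneg
            (Eventually.of_forall fun z => sParetoPdf_mul_cdf_mul_cdf_nonneg c z)
            (integrableOn_Ioi_inv_add_pow two_ne_zero (by linarith))
            ((ae_restrict_mem measurableSet_Ioi).mono fun z hz =>
              sParetoPdf_mul_cdf_mul_cdf_le hc.le (le_of_lt hz))
      _ = sParetoCdf (-c) := by
          rw [integral_Ioi_inv_add_pow two_ne_zero (by linarith), sParetoCdf_neg hc, zero_add,
            Nat.cast_ofNat, one_div]
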